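/- arXiv:2308.14493 — 12 statements merged into one kernel-verified Lean document; each statement's English description precedes it below -/
import Mathlib

section
/- Let H be a connected simple graph on a 4-element vertex set. Then the number of 4-subsets S of V with G'[S] isomorphic to H, plus the number of 4-subsets S contained in W with G[S] isomorphic to H, equals the number of 4-subsets S of V with G[S] isomorphic to H, plus the number of 4-subsets S contained in W with G'[S] isomorphic to H. (Equivalently, the count of induced copies of H in the updated graph G' equals the count in G plus the count over 4-subsets of W in G' minus the count over 4-subsets of W in G.) -/
open scoped Classical

theorem statement_0
    {V K : Type*} [Fintype V] [DecidableEq V] [Fintype K]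
    (G B G' : SimpleGraph V)
    (hdisj : ∀ u v : V, ¬ (G.Adj u v ∧ B.Adj u v))
    (hG' : G' = G ⊔ B)
    (W : Set V)
    (hW : W = {x : V | ∃ u v : V, B.Adj u v ∧
      ((∃ p : G'.Walk u x, p.length ≤ 3) ∨ (∃ p : G'.Walk v x, p.length ≤ 3))})
    (H : SimpleGraph K) (hK : Fintype.card K = 4) (hH : H.Connected) :
    (Finset.univ.filter fun S : Finset V =>
        S.card = 4 ∧ Nonempty ((G'.induce (S : Set V)) ≃g H)).card
      + (Finset.univ.filter fun S : Finset V =>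
        S.card = 4 ∧ (S : Set V) ⊆ W ∧ Nonempty ((G.induce (S : Set V)) ≃g H)).card
    = (Finset.univ.filter fun S : Finset V =>
        S.card = 4 ∧ Nonempty ((G.induce (S : Set V)) ≃g H)).card
      + (Finset.univ.filter fun S : Finset V =>
        S.card = 4 ∧ (S : Set V) ⊆ W ∧ Nonempty ((G'.induce (S : Set V)) ≃g H)).card := by
  classical
  have hle : G ≤ G' := by rw [hG']; exact le_sup_left
  -- key : on S not contained in W, the induced graphs agree when one is iso to H
  have key : ∀ S : Finset V, S.card = 4 → ¬ ((S : Set V) ⊆ W) →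
      (Nonempty ((G'.induce (S : Set V)) ≃g H) ↔
        Nonempty ((G.induce (S : Set V)) ≃g H)) := by
    intro S hcard hne
    obtain ⟨x, hxS, hxW⟩ := Set.not_subset.mp hne
    have hcardS : Fintype.card (S : Set V) = 4 := by
      simpa using hcard
    have noB : ∀ Γ : SimpleGraph V, Γ ≤ G' → (Γ.induce (S : Set V)).Connected →
        ∀ u v : V, u ∈ S → B.Adj u v → False := by
      intro Γ hΓ hconn u v huS hadj
      have hreach := hconn.preconnected ⟨u, by simpa using huS⟩ ⟨x, by simpa using hxS⟩
      obtain ⟨p⟩ := hreach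
      have hq : p.toPath.1.length < 4 := by
        have := p.toPath.2.length_lt
        omega
      -- map the path to a walk in G'
      let q := ((p.toPath.1.map (SimpleGraph.Embedding.induce (S : Set V)).toHom).map
        (SimpleGraph.Hom.ofLE hΓ))
      have hql : q.length ≤ 3 := by
        simp only [q, SimpleGraph.Walk.length_map]
        omega
      apply hxW
      rw [hW]
      exact ⟨u, v, hadj, Or.inl ⟨q, hql⟩⟩
    have heq : ∀ Γ : SimpleGraph V, Γ ≤ G' → (Γ.induce (S : Set V)).Connected →
        G'.induce (S : Set V) = G.induce (S : Set V) := by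
      intro Γ hΓ hconn
      ext a b
      simp only [SimpleGraph.comap_adj, Function.Embedding.coe_subtype, hG',
        SimpleGraph.sup_adj]
      constructor
      · rintro (h | h)
        · exact h
        · exact absurd h (fun h => noB Γ hΓ hconn a b a.2 h)
      · exact Or.inl
    constructor
    · rintro ⟨e⟩
      have hconn : (G'.induce (S : Set V)).Connected := e.connected_iff.mpr hH
      exact ⟨(heq G' le_rfl hconn) ▸ e⟩
    · rintro ⟨e⟩
      have hconn : (G.induce (S : Set V)).Connected := e.connected_iff.mpr hH
      exact ⟨(heq G hle hconn) ▸ e⟩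
  -- split counts by containment in W
  have split : ∀ Γ : SimpleGraph V,
      (Finset.univ.filter fun S : Finset V =>
        S.card = 4 ∧ Nonempty ((Γ.induce (S : Set V)) ≃g H)).card
      = (Finset.univ.filter fun S : Finset V =>
          S.card = 4 ∧ (S : Set V) ⊆ W ∧ Nonempty ((Γ.induce (S : Set V)) ≃g H)).card
        + (Finset.univ.filter fun S : Finset V =>
          (S.card = 4 ∧ Nonempty ((Γ.induce (S : Set V)) ≃g H)) ∧
            ¬ (S : Set V) ⊆ W).card := by
    intro Γ
    rw [← Finset.card_filter_add_card_filter_not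
      (s := Finset.univ.filter fun S : Finset V =>
        S.card = 4 ∧ Nonempty ((Γ.induce (S : Set V)) ≃g H))
      (p := fun S : Finset V => (S : Set V) ⊆ W)]
    rw [Finset.filter_filter, Finset.filter_filter]
    congr 2
    ext S
    simp only [Finset.mem_filter]
    tauto
  have hsame : (Finset.univ.filter fun S : Finset V =>
      (S.card = 4 ∧ Nonempty ((G'.induce (S : Set V)) ≃g H)) ∧ ¬ (S : Set V) ⊆ W)
    = (Finset.univ.filter fun S : Finset V =>
      (S.card = 4 ∧ Nonempty ((G.induce (S : Set V)) ≃g H)) ∧ ¬ (S : Set V) ⊆ W) := by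
    apply Finset.filter_congr
    intro S _
    constructor
    · rintro ⟨⟨h4, hi⟩, hw⟩
      exact ⟨⟨h4, (key S h4 hw).mp hi⟩, hw⟩
    · rintro ⟨⟨h4, hi⟩, hw⟩
      exact ⟨⟨h4, (key S h4 hw).mpr hi⟩, hw⟩
  rw [split G', split G, hsame]
  ring
end

section
/- Let H be a connected simple graph on a 4-element vertex set. Then the number of 4-subsets S of V with G'[S] isomorphic to H, plus the number of 4-subsets S contained in W with G[S] isomorphic to H, equals the number of 4-subsets S of V with G[S] isomorphic to H, plus the number of 4-subsets S contained in W with G'[S] isomorphic to H. (Equivalently, after a fully dynamic batch of additions A and deletions D, the count of induced copies of H in G' equals the count in G plus the count over 4-subsets of W in G' minus the count over 4-subsets of W in G.) -/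
open scoped Classical

private lemma aux_subW
    {V : Type*} [Fintype V] [DecidableEq V]
    (T GG : SimpleGraph V) (hle : GG ≤ T)
    (S : Finset V) (hcard : S.card = 4)
    (hconn : (GG.induce (S : Set V)).Connected)
    {u x : V} (hu : u ∈ S) (hx : x ∈ S) :
    ∃ p : T.Walk u x, p.length ≤ 3 := by
  obtain ⟨w⟩ := hconn.preconnected ⟨u, hu⟩ ⟨x, hx⟩
  have hlen : w.toPath.1.length ≤ 3 := by
    have h1 := w.toPath.2.length_lt
    have hc : Fintype.card (S : Set V) = 4 := by
      simpa using hcard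
    omega
  let f0 : GG.induce (S : Set V) →g GG := ⟨Subtype.val, fun h => h⟩
  let f : GG.induce (S : Set V) →g T :=
    (SimpleGraph.Hom.ofLE hle).comp f0
  refine ⟨(w.toPath.1).map f, ?_⟩
  exact (SimpleGraph.Walk.length_map _ _).trans_le hlen

theorem statement_1
    {V K : Type*} [Fintype V] [DecidableEq V] [Fintype K]
    (G A D G' : SimpleGraph V)
    (hdisj : ∀ u v : V, ¬ (G.Adj u v ∧ A.Adj u v))
    (hD : D ≤ G)
    (hG' : G' = (G \ D) ⊔ A)
    (W : Set V)
    (hW : W = {x : V | ∃ u v : V, (A.Adj u v ∨ D.Adj u v) ∧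
      ((∃ p : (G ⊔ A).Walk u x, p.length ≤ 3) ∨ (∃ p : (G ⊔ A).Walk v x, p.length ≤ 3))})
    (H : SimpleGraph K) (hK : Fintype.card K = 4) (hH : H.Connected) :
    (Finset.univ.filter fun S : Finset V =>
        S.card = 4 ∧ Nonempty ((G'.induce (S : Set V)) ≃g H)).card
      + (Finset.univ.filter fun S : Finset V =>
        S.card = 4 ∧ (S : Set V) ⊆ W ∧ Nonempty ((G.induce (S : Set V)) ≃g H)).card
    = (Finset.univ.filter fun S : Finset V =>
        S.card = 4 ∧ Nonempty ((G.induce (S : Set V)) ≃g H)).card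
      + (Finset.univ.filter fun S : Finset V =>
        S.card = 4 ∧ (S : Set V) ⊆ W ∧ Nonempty ((G'.induce (S : Set V)) ≃g H)).card := by
  have hG'le : G' ≤ G ⊔ A := by
    rw [hG']
    exact sup_le_sup_right sdiff_le A
  have hGle : G ≤ G ⊔ A := le_sup_left
  -- key: a changed edge inside S forces S ⊆ W (when induce is iso to H)
  have key : ∀ (GG : SimpleGraph V), GG ≤ G ⊔ A → ∀ S : Finset V, S.card = 4 →
      Nonempty ((GG.induce (S : Set V)) ≃g H) → ¬ ((S : Set V) ⊆ W) →
      ∀ u v, u ∈ S → v ∈ S → ¬ (A.Adj u v ∨ D.Adj u v) := by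
    intro GG hle S hcard ⟨e⟩ hnsub u v hu hv hchg
    apply hnsub
    intro x hx
    have hconn : (GG.induce (S : Set V)).Connected :=
      e.connected_iff.mpr hH
    obtain ⟨p, hp⟩ := aux_subW (G ⊔ A) GG hle S hcard hconn hu hx
    rw [hW]
    exact ⟨u, v, hchg, Or.inl ⟨p, hp⟩⟩
  -- no changed edge inside S ⇒ induced graphs equal
  have heq : ∀ S : Finset V,
      (∀ u v, u ∈ S → v ∈ S → ¬ (A.Adj u v ∨ D.Adj u v)) →
      G.induce (S : Set V) = G'.induce (S : Set V) := by
    intro S hno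
    ext a b
    have hA : ¬ A.Adj a b := fun h => hno a b a.2 b.2 (Or.inl h)
    have hDadj : ¬ D.Adj a b := fun h => hno a b a.2 b.2 (Or.inr h)
    simp only [SimpleGraph.comap_adj, Function.Embedding.coe_subtype, hG',
      SimpleGraph.sup_adj, SimpleGraph.sdiff_adj]
    tauto
  -- iff for S not in W
  have hiff : ∀ S : Finset V, S.card = 4 → ¬ ((S : Set V) ⊆ W) →
      (Nonempty ((G'.induce (S : Set V)) ≃g H) ↔ Nonempty ((G.induce (S : Set V)) ≃g H)) := by
    intro S hcard hnsub
    constructor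
    · rintro ⟨e⟩
      have := heq S (key G' hG'le S hcard ⟨e⟩ hnsub)
      rw [this]; exact ⟨e⟩
    · rintro ⟨e⟩
      have := heq S (key G hGle S hcard ⟨e⟩ hnsub)
      rw [← this]; exact ⟨e⟩
  classical
  -- split the two full counts by ⊆ W
  have split : ∀ (GG : SimpleGraph V),
      (Finset.univ.filter fun S : Finset V =>
        S.card = 4 ∧ Nonempty ((GG.induce (S : Set V)) ≃g H)).card
      = (Finset.univ.filter fun S : Finset V =>
          S.card = 4 ∧ (S : Set V) ⊆ W ∧ Nonempty ((GG.induce (S : Set V)) ≃g H)).card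
        + (Finset.univ.filter fun S : Finset V =>
          (S.card = 4 ∧ Nonempty ((GG.induce (S : Set V)) ≃g H)) ∧ ¬ (S : Set V) ⊆ W).card := by
    intro GG
    rw [← Finset.card_filter_add_card_filter_not
      (s := Finset.univ.filter fun S : Finset V =>
        S.card = 4 ∧ Nonempty ((GG.induce (S : Set V)) ≃g H))
      (p := fun S : Finset V => (S : Set V) ⊆ W)]
    congr 1
    · rw [Finset.filter_filter]
      congr 1
      apply Finset.filter_congr
      intro S _
      tauto
    · rw [Finset.filter_filter]
  have hfe : (Finset.univ.filter fun S : Finset V =>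
        (S.card = 4 ∧ Nonempty ((G'.induce (S : Set V)) ≃g H)) ∧ ¬ (S : Set V) ⊆ W)
      = (Finset.univ.filter fun S : Finset V =>
        (S.card = 4 ∧ Nonempty ((G.induce (S : Set V)) ≃g H)) ∧ ¬ (S : Set V) ⊆ W) := by
    apply Finset.filter_congr
    intro S _
    constructor
    · rintro ⟨⟨h4, hne⟩, hns⟩
      exact ⟨⟨h4, (hiff S h4 hns).mp hne⟩, hns⟩
    · rintro ⟨⟨h4, hne⟩, hns⟩
      exact ⟨⟨h4, (hiff S h4 hns).mpr hne⟩, hns⟩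
  rw [split G', split G, hfe]
  omega
end

section
/- If S is a 4-subset of V such that G'[S] is connected and there exist vertices u, v ∈ S with {u,v} an edge of B, then S ⊆ W; that is, every induced size-4 graphlet of G' containing at least one newly added edge lies entirely inside the local subgraph on W. -/
open scoped Classical

theorem statement_3
    {V K : Type*} [Fintype V] [DecidableEq V] [Fintype K]
    (G B G' : SimpleGraph V)
    (hdisj : ∀ u v : V, ¬ (G.Adj u v ∧ B.Adj u v))
    (hG' : G' = G ⊔ B)
    (W : Set V)
    (hW : W = {x : V | ∃ u v : V, B.Adj u v ∧
      ((∃ p : G'.Walk u x, p.length ≤ 3) ∨ (∃ p : G'.Walk v x, p.length ≤ 3))})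
    (S : Finset V) (hcard : S.card = 4)
    (hconn : (G'.induce (S : Set V)).Connected)
    (hedge : ∃ u ∈ S, ∃ v ∈ S, B.Adj u v) :
    (S : Set V) ⊆ W := by
  obtain ⟨u, hu, v, hv, huv⟩ := hedge
  intro x hx
  subst hW
  refine ⟨u, v, huv, Or.inl ?_⟩
  have hcardS : Fintype.card (S : Set V) = 4 := by
    simpa using hcard
  have hr : (G'.induce (S : Set V)).Reachable ⟨u, hu⟩ ⟨x, hx⟩ := hconn ⟨u, hu⟩ ⟨x, hx⟩
  obtain ⟨w⟩ := hr
  have hp := w.toPath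
  have hlen : (w.toPath : (G'.induce (S : Set V)).Walk ⟨u, hu⟩ ⟨x, hx⟩).length < 4 := by
    have := (w.toPath.2).length_lt
    rwa [hcardS] at this
  refine ⟨((w.toPath : (G'.induce (S : Set V)).Walk ⟨u, hu⟩ ⟨x, hx⟩).map
    (SimpleGraph.Embedding.induce (S : Set V)).toHom), ?_⟩
  refine (SimpleGraph.Walk.length_map _ _).trans_le ?_
  omega
end

section
/- If S is a 4-subset of V such that G[S] is connected and G[S] differs from G'[S] (i.e., some pair of vertices of S is adjacent in G' but not in G), then S ⊆ W; that is, every induced size-4 graphlet of G that is subsumed (extended to a different graphlet) by the addition of the batch B lies entirely inside the local subgraph on W. -/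
open scoped Classical

theorem statement_4
    {V K : Type*} [Fintype V] [DecidableEq V] [Fintype K]
    (G B G' : SimpleGraph V)
    (hdisj : ∀ u v : V, ¬ (G.Adj u v ∧ B.Adj u v))
    (hG' : G' = G ⊔ B)
    (W : Set V)
    (hW : W = {x : V | ∃ u v : V, B.Adj u v ∧
      ((∃ p : G'.Walk u x, p.length ≤ 3) ∨ (∃ p : G'.Walk v x, p.length ≤ 3))})
    (S : Finset V) (hcard : S.card = 4)
    (hconn : (G.induce (S : Set V)).Connected)
    (hdiff : ∃ u ∈ S, ∃ v ∈ S, G'.Adj u v ∧ ¬ G.Adj u v) :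
    (S : Set V) ⊆ W := by
  obtain ⟨u, hu, v, hv, hadj, hnadj⟩ := hdiff
  have hB : B.Adj u v := by
    rw [hG'] at hadj
    cases hadj with
    | inl h => exact absurd h hnadj
    | inr h => exact h
  intro x hx
  rw [hW]
  refine ⟨u, v, hB, Or.inl ?_⟩
  have hr : (G.induce (S : Set V)).Reachable ⟨u, hu⟩ ⟨x, hx⟩ :=
    hconn.preconnected _ _
  obtain ⟨w⟩ := hr
  have hcard' : Fintype.card ((S : Set V) : Type _) = 4 := by
    simpa using hcard
  have hlen : w.toPath.1.length ≤ 3 := by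
    have := w.toPath.2.length_lt
    omega
  refine ⟨(w.toPath.1.map (SimpleGraph.Embedding.induce (S : Set V)).toHom).mapLe
    (hG' ▸ le_sup_left), ?_⟩
  exact (SimpleGraph.Walk.length_mapLe ..).trans_le ((SimpleGraph.Walk.length_map ..).trans_le hlen)
end

section
/- If S is a 4-subset of V that is not contained in W, and at least one of G[S], G'[S] is connected, then G[S] and G'[S] are equal (for every pair of vertices of S, adjacency in G coincides with adjacency in G'); that is, outside the local subgraph on W, no connected size-4 graphlet changes when the batch B is added. -/
open scoped Classical

lemma walk_le3_aux {V : Type*} [Fintype V] [DecidableEq V] (G G' : SimpleGraph V)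
    (hle : G ≤ G') (S : Finset V) (hcard : S.card = 4)
    (hc : (G.induce (S : Set V)).Connected) {u x : V} (hu : u ∈ S) (hx : x ∈ S) :
    ∃ p : G'.Walk u x, p.length ≤ 3 := by
  obtain ⟨w⟩ := hc ⟨u, hu⟩ ⟨x, hx⟩
  have hp := w.bypass_isPath
  have hlen : w.bypass.length < Fintype.card (S : Set V) := hp.length_lt
  have hcard' : Fintype.card (S : Set V) = 4 := by simp [hcard]
  refine ⟨((w.bypass.map (SimpleGraph.Embedding.induce (S : Set V)).toHom).mapLe hle), ?_⟩
  simp only [SimpleGraph.Walk.mapLe, SimpleGraph.Walk.length_map]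
  erw [SimpleGraph.Walk.length_map, SimpleGraph.Walk.length_map]
  omega

theorem statement_5
    {V K : Type*} [Fintype V] [DecidableEq V] [Fintype K]
    (G B G' : SimpleGraph V)
    (hdisj : ∀ u v : V, ¬ (G.Adj u v ∧ B.Adj u v))
    (hG' : G' = G ⊔ B)
    (W : Set V)
    (hW : W = {x : V | ∃ u v : V, B.Adj u v ∧
      ((∃ p : G'.Walk u x, p.length ≤ 3) ∨ (∃ p : G'.Walk v x, p.length ≤ 3))})
    (S : Finset V) (hcard : S.card = 4)
    (hnotW : ¬ (S : Set V) ⊆ W)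
    (hconn : (G.induce (S : Set V)).Connected ∨ (G'.induce (S : Set V)).Connected) :
    ∀ u ∈ S, ∀ v ∈ S, (G.Adj u v ↔ G'.Adj u v) := by
  rw [Set.not_subset] at hnotW
  obtain ⟨x, hxS, hxW⟩ := hnotW
  intro u hu v hv
  constructor
  · intro h
    rw [hG']
    exact Or.inl h
  · intro h
    rw [hG', SimpleGraph.sup_adj] at h
    rcases h with h | h
    · exact h
    · exfalso
      apply hxW
      rw [hW]
      refine ⟨u, v, h, Or.inl ?_⟩
      rcases hconn with hc | hc
      · exact walk_le3_aux G G' (by rw [hG']; exact le_sup_left) S hcard hc hu hxS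
      · exact walk_le3_aux G' G' le_rfl S hcard hc hu hxS
end

section
/- Let H be a connected simple graph on a 4-element vertex set. Then the number of 4-subsets S of V such that G'[S] is isomorphic to H and some pair of vertices of S is an edge of B equals the number of such 4-subsets S that are moreover contained in W; that is, all new induced copies of H created by the batch are counted by counting within the local subgraph on W. -/
open scoped Classical

theorem statement_6
    {V K : Type*} [Fintype V] [DecidableEq V] [Fintype K]
    (G B G' : SimpleGraph V)
    (hdisj : ∀ u v : V, ¬ (G.Adj u v ∧ B.Adj u v))
    (hG' : G' = G ⊔ B)
    (W : Set V)
    (hW : W = {x : V | ∃ u v : V, B.Adj u v ∧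
      ((∃ p : G'.Walk u x, p.length ≤ 3) ∨ (∃ p : G'.Walk v x, p.length ≤ 3))})
    (H : SimpleGraph K) (hK : Fintype.card K = 4) (hH : H.Connected) :
    (Finset.univ.filter fun S : Finset V =>
        S.card = 4 ∧ Nonempty ((G'.induce (S : Set V)) ≃g H) ∧ (∃ u ∈ S, ∃ v ∈ S, B.Adj u v)).card
    = (Finset.univ.filter fun S : Finset V =>
        S.card = 4 ∧ Nonempty ((G'.induce (S : Set V)) ≃g H) ∧ (∃ u ∈ S, ∃ v ∈ S, B.Adj u v) ∧ (S : Set V) ⊆ W).card := by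
  congr 1
  apply Finset.filter_congr
  intro S _
  constructor
  · rintro ⟨hc, ⟨e⟩, u, hu, v, hv, huv⟩
    refine ⟨hc, ⟨e⟩, ⟨u, hu, v, hv, huv⟩, ?_⟩
    intro x hx
    have hconn : (G'.induce (S : Set V)).Connected := e.connected_iff.mpr hH
    have hreach : (G'.induce (S : Set V)).Reachable ⟨u, hu⟩ ⟨x, hx⟩ := hconn ⟨u, hu⟩ ⟨x, hx⟩
    obtain ⟨p⟩ := hreach
    have hcard : Fintype.card (S : Set V) = 4 := by
      simpa [Fintype.card_coe] using hc
    have hlen : (p.toPath : (G'.induce (S : Set V)).Walk ⟨u, hu⟩ ⟨x, hx⟩).length ≤ 3 := by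
      have := (p.toPath.isPath).length_lt
      omega
    refine hW ▸ ⟨u, v, huv, Or.inl ⟨((p.toPath : (G'.induce (S : Set V)).Walk ⟨u, hu⟩ ⟨x, hx⟩).map (SimpleGraph.Embedding.induce (G := G') (S : Set V)).toHom).copy rfl rfl, ?_⟩⟩
    exact ((SimpleGraph.Walk.length_copy ..).trans (SimpleGraph.Walk.length_map ..)).trans_le hlen
  · rintro ⟨hc, he, hb, _⟩
    exact ⟨hc, he, hb⟩
end

section
/- Let H be a connected simple graph on a 4-element vertex set. Then the number of 4-subsets S of V such that G[S] is isomorphic to H and G[S] differs from G'[S] equals the number of such 4-subsets S that are moreover contained in W; that is, all induced copies of H in G that are destroyed (made non-induced) by the batch are counted by counting within the local subgraph on W. -/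
open scoped Classical

theorem statement_7
    {V K : Type*} [Fintype V] [DecidableEq V] [Fintype K]
    (G B G' : SimpleGraph V)
    (hdisj : ∀ u v : V, ¬ (G.Adj u v ∧ B.Adj u v))
    (hG' : G' = G ⊔ B)
    (W : Set V)
    (hW : W = {x : V | ∃ u v : V, B.Adj u v ∧
      ((∃ p : G'.Walk u x, p.length ≤ 3) ∨ (∃ p : G'.Walk v x, p.length ≤ 3))})
    (H : SimpleGraph K) (hK : Fintype.card K = 4) (hH : H.Connected) :
    (Finset.univ.filter fun S : Finset V =>
        S.card = 4 ∧ Nonempty ((G.induce (S : Set V)) ≃g H) ∧ G.induce (S : Set V) ≠ G'.induce (S : Set V)).card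
    = (Finset.univ.filter fun S : Finset V =>
        S.card = 4 ∧ Nonempty ((G.induce (S : Set V)) ≃g H) ∧ G.induce (S : Set V) ≠ G'.induce (S : Set V) ∧ (S : Set V) ⊆ W).card := by
  have key : ∀ S : Finset V, S.card = 4 →
      Nonempty ((G.induce (S : Set V)) ≃g H) →
      G.induce (S : Set V) ≠ G'.induce (S : Set V) → (S : Set V) ⊆ W := by
    intro S hcard ⟨e⟩ hne
    -- find a B-edge inside S
    have hle : G ≤ G' := hG' ▸ le_sup_left
    have : ∃ a b : (S : Set V), G'.Adj a b ∧ ¬ G.Adj a b := by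
      by_contra hcon
      push_neg at hcon
      apply hne
      ext a b
      simp only [SimpleGraph.comap_adj, Function.Embedding.coe_subtype]
      exact ⟨fun h => hle h, fun h => by
        by_contra hG
        exact hG (hcon a b h)⟩
    obtain ⟨a, b, hab, hnab⟩ := this
    have hB : B.Adj (a : V) (b : V) := by
      rw [hG'] at hab
      rcases hab with h | h
      · exact absurd h hnab
      · exact h
    -- connectivity of the induced graph
    have hconn : (G.induce (S : Set V)).Connected := e.connected_iff.mpr hH
    have h4 : Fintype.card (S : Set V) = 4 := by simpa using hcard
    intro x hx
    rw [hW]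
    refine ⟨a, b, hB, Or.inl ?_⟩
    obtain ⟨w⟩ := hconn.preconnected a ⟨x, hx⟩
    have hlen : w.toPath.1.length < 4 := by
      have := w.toPath.2.length_lt
      rwa [h4] at this
    refine ⟨(w.toPath.1.map (SimpleGraph.Embedding.induce (S : Set V)).toHom).mapLe hle, ?_⟩
    exact le_trans (le_of_eq (SimpleGraph.Walk.length_mapLe ..)) (le_trans (le_of_eq (SimpleGraph.Walk.length_map ..)) (Nat.lt_succ_iff.mp hlen))
  congr 1
  apply Finset.filter_congr
  intro S _
  constructor
  · rintro ⟨h1, h2, h3⟩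
    exact ⟨h1, h2, h3, key S h1 h2 h3⟩
  · rintro ⟨h1, h2, h3, _⟩
    exact ⟨h1, h2, h3⟩
end

section
/- Let H be a connected simple graph on a 4-element vertex set. Then the number of 4-subsets S contained in W with G'[S] isomorphic to H, plus the number of 4-subsets S of V with G[S] isomorphic to H and G[S] ≠ G'[S], equals the number of 4-subsets S contained in W with G[S] isomorphic to H, plus the number of 4-subsets S of V with G'[S] isomorphic to H and G'[S] ≠ G[S]. (Equivalently, the difference of the local counts C_a − C_b equals the number of newly created induced copies of H minus the number of destroyed induced copies of H.) -/
open scoped Classical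

theorem statement_8
    {V K : Type*} [Fintype V] [DecidableEq V] [Fintype K]
    (G B G' : SimpleGraph V)
    (hdisj : ∀ u v : V, ¬ (G.Adj u v ∧ B.Adj u v))
    (hG' : G' = G ⊔ B)
    (W : Set V)
    (hW : W = {x : V | ∃ u v : V, B.Adj u v ∧
      ((∃ p : G'.Walk u x, p.length ≤ 3) ∨ (∃ p : G'.Walk v x, p.length ≤ 3))})
    (H : SimpleGraph K) (hK : Fintype.card K = 4) (hH : H.Connected) :
    (Finset.univ.filter fun S : Finset V =>
        S.card = 4 ∧ (S : Set V) ⊆ W ∧ Nonempty ((G'.induce (S : Set V)) ≃g H)).card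
      + (Finset.univ.filter fun S : Finset V =>
        S.card = 4 ∧ Nonempty ((G.induce (S : Set V)) ≃g H) ∧ G.induce (S : Set V) ≠ G'.induce (S : Set V)).card
    = (Finset.univ.filter fun S : Finset V =>
        S.card = 4 ∧ (S : Set V) ⊆ W ∧ Nonempty ((G.induce (S : Set V)) ≃g H)).card
      + (Finset.univ.filter fun S : Finset V =>
        S.card = 4 ∧ Nonempty ((G'.induce (S : Set V)) ≃g H) ∧ G'.induce (S : Set V) ≠ G.induce (S : Set V)).card := by
  -- If an induced subgraph (of a subgraph of G') on 4 vertices is isomorphic to H and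
  -- contains an endpoint of a B-edge, then it is contained in W.
  have key : ∀ (X : SimpleGraph V), X ≤ G' → ∀ S : Finset V, S.card = 4 →
      Nonempty ((X.induce (S : Set V)) ≃g H) →
      (∃ u v, u ∈ S ∧ B.Adj u v) → (S : Set V) ⊆ W := by
    rintro X hX S h4 ⟨e⟩ ⟨u, v, hu, huv⟩ x hx
    have hconn : (X.induce (S : Set V)).Connected := e.connected_iff.mpr hH
    obtain ⟨p⟩ := hconn.preconnected ⟨u, hu⟩ ⟨x, hx⟩
    have hcard : Fintype.card ↥(S : Set V) = 4 := by simp [h4]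
    have hlen : p.toPath.1.length < 4 := hcard ▸ p.toPath.2.length_lt
    let f : X.induce (S : Set V) →g X := ⟨Subtype.val, fun h => h⟩
    refine hW ▸ ⟨u, v, huv, Or.inl ⟨(p.toPath.1.map f).mapLe hX, ?_⟩⟩
    have : ((p.toPath.1.map f).mapLe hX).length = p.toPath.1.length := by
      rw [SimpleGraph.Walk.length_mapLe, SimpleGraph.Walk.length_map]
    omega
  -- A changed induced subgraph contains both endpoints of a B-edge.
  have hBedge : ∀ S : Finset V, G.induce (S : Set V) ≠ G'.induce (S : Set V) →
      ∃ u v, u ∈ S ∧ B.Adj u v := by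
    intro S hne
    by_contra hcon
    push_neg at hcon
    apply hne
    ext a b
    show G.Adj ↑a ↑b ↔ G'.Adj ↑a ↑b
    rw [hG']
    simp only [SimpleGraph.sup_adj]
    constructor
    · exact Or.inl
    · rintro (h | h)
      · exact h
      · exact absurd h (hcon a.1 b.1 a.2)
  -- cleaner version of hBedge conclusion
  have hBedge' : ∀ S : Finset V, G.induce (S : Set V) ≠ G'.induce (S : Set V) →
      ∃ u v, u ∈ S ∧ B.Adj u v := hBedge
  classical
  set ne := fun S : Finset V => G.induce (S : Set V) ≠ G'.induce (S : Set V) with hne_def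
  set A1 := Finset.univ.filter fun S : Finset V =>
    S.card = 4 ∧ (S : Set V) ⊆ W ∧ Nonempty ((G'.induce (S : Set V)) ≃g H) with hA1
  set B1 := Finset.univ.filter fun S : Finset V =>
    S.card = 4 ∧ (S : Set V) ⊆ W ∧ Nonempty ((G.induce (S : Set V)) ≃g H) with hB1
  have splitA : (A1.filter ne).card + (A1.filter (fun S => ¬ ne S)).card = A1.card :=
    Finset.card_filter_add_card_filter_not ne
  have splitB : (B1.filter ne).card + (B1.filter (fun S => ¬ ne S)).card = B1.card :=
    Finset.card_filter_add_card_filter_not ne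
  have eqA : A1.filter ne = Finset.univ.filter fun S : Finset V =>
      S.card = 4 ∧ Nonempty ((G'.induce (S : Set V)) ≃g H) ∧
        G'.induce (S : Set V) ≠ G.induce (S : Set V) := by
    ext S
    simp only [hA1, Finset.mem_filter, Finset.mem_univ, true_and]
    constructor
    · rintro ⟨⟨h4, _, hi⟩, hne⟩
      exact ⟨h4, hi, Ne.symm hne⟩
    · rintro ⟨h4, hi, hne⟩
      exact ⟨⟨h4, key G' le_rfl S h4 hi (hBedge' S (Ne.symm hne)), hi⟩, Ne.symm hne⟩
  have eqB : B1.filter ne = Finset.univ.filter fun S : Finset V =>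
      S.card = 4 ∧ Nonempty ((G.induce (S : Set V)) ≃g H) ∧
        G.induce (S : Set V) ≠ G'.induce (S : Set V) := by
    ext S
    simp only [hB1, Finset.mem_filter, Finset.mem_univ, true_and]
    constructor
    · rintro ⟨⟨h4, _, hi⟩, hne⟩
      exact ⟨h4, hi, hne⟩
    · rintro ⟨h4, hi, hne⟩
      refine ⟨⟨h4, key G (by rw [hG']; exact le_sup_left) S h4 hi (hBedge' S hne), hi⟩, hne⟩
  have eqU : A1.filter (fun S => ¬ ne S) = B1.filter (fun S => ¬ ne S) := by
    ext S
    simp only [hA1, hB1, hne_def, Finset.mem_filter, Finset.mem_univ, true_and, not_not]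
    constructor
    · rintro ⟨⟨h4, hw, hi⟩, heq⟩
      exact ⟨⟨h4, hw, heq ▸ hi⟩, heq⟩
    · rintro ⟨⟨h4, hw, hi⟩, heq⟩
      exact ⟨⟨h4, hw, heq ▸ hi⟩, heq⟩
  rw [← splitA, ← splitB, eqA, eqB, eqU]
  ring
end

section
/- If S is a 4-subset of V such that at least one of G[S], G'[S] is connected and there exist vertices u, v ∈ S with {u,v} an edge of A or an edge of D, then S ⊆ W; that is, in the fully dynamic setting every connected size-4 graphlet of G or of G' touching a changed edge lies entirely inside the local subgraph on W. -/
open scoped Classical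

theorem statement_9
    {V K : Type*} [Fintype V] [DecidableEq V] [Fintype K]
    (G A D G' : SimpleGraph V)
    (hdisj : ∀ u v : V, ¬ (G.Adj u v ∧ A.Adj u v))
    (hD : D ≤ G)
    (hG' : G' = (G \ D) ⊔ A)
    (W : Set V)
    (hW : W = {x : V | ∃ u v : V, (A.Adj u v ∨ D.Adj u v) ∧
      ((∃ p : (G ⊔ A).Walk u x, p.length ≤ 3) ∨ (∃ p : (G ⊔ A).Walk v x, p.length ≤ 3))})
    (S : Finset V) (hcard : S.card = 4)
    (hconn : (G.induce (S : Set V)).Connected ∨ (G'.induce (S : Set V)).Connected)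
    (hedge : (∃ u ∈ S, ∃ v ∈ S, (A.Adj u v ∨ D.Adj u v))) :
    (S : Set V) ⊆ W := by
  have hG'le : G' ≤ G ⊔ A := by
    rw [hG']; exact sup_le_sup sdiff_le le_rfl
  have hGle : G ≤ G ⊔ A := le_sup_left
  intro x hx
  obtain ⟨u, hu, v, hv, huv⟩ := hedge
  have key : ∀ H : SimpleGraph V, H ≤ G ⊔ A → (H.induce (S : Set V)).Connected →
      ∃ p : (G ⊔ A).Walk u x, p.length ≤ 3 := by
    intro H hle hc
    obtain ⟨w⟩ := hc.preconnected ⟨u, by simpa using hu⟩ ⟨x, hx⟩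
    set p := w.toPath with hp
    have hlen : p.1.length < Fintype.card (S : Set V) := p.2.length_lt
    have hcard4 : Fintype.card (S : Set V) = 4 := by
      rw [← hcard]
      exact Fintype.card_congr (Equiv.refl _) |>.trans (Fintype.card_coe S)
    have hlen3 : p.1.length ≤ 3 := by omega
    refine ⟨(p.1.map (SimpleGraph.Embedding.induce (S : Set V)).toHom).mapLe hle, ?_⟩
    exact ((SimpleGraph.Walk.length_mapLe hle _).trans (SimpleGraph.Walk.length_map _ _)).le.trans hlen3
  rw [hW]
  refine ⟨u, v, huv, ?_⟩
  rcases hconn with h | h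
  · exact Or.inl (key G hGle h)
  · exact Or.inl (key G' hG'le h)
end

section
/- Let H be a connected simple graph on a 4-element vertex set. In the fully dynamic setting, the number of 4-subsets S of V such that G'[S] is isomorphic to H and G'[S] differs from G[S] equals the number of such 4-subsets S that are moreover contained in W; that is, all induced copies of H created by the fully dynamic batch (type-1 copies of G' touching changed edges and transitioned copies) are counted by counting within the local subgraph on W. -/
/-!
A changed induced subgraph `G'[S]` contains a changed pair `{a, b}`, which is an edge of `A` or
of `D`. If `G'[S] ≅ H` is connected, every `x ∈ S` is joined to `a` inside `G'[S]` by a path,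
of length at most `|S| - 1 = 3`, and `G' ≤ G ⊔ A` turns it into a short walk of `G ⊔ A`.
Hence `S ⊆ W`, and the two filters coincide.
-/

open scoped Classical

namespace SimpleGraph

variable {V : Type*}

theorem sdiff_sup_le_sup (G D A : SimpleGraph V) : (G \ D) ⊔ A ≤ G ⊔ A :=
  sup_le_sup_right sdiff_le A

theorem adj_or_adj_of_sdiff_sup_adj_ne {G D A : SimpleGraph V} {x y : V}
    (h : ¬(((G \ D) ⊔ A).Adj x y ↔ G.Adj x y)) : A.Adj x y ∨ D.Adj x y := by
  by_contra! hAD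
  simp [hAD.1, hAD.2] at h

theorem exists_adj_ne_of_induce_ne {G G' : SimpleGraph V} {s : Set V}
    (h : G'.induce s ≠ G.induce s) : ∃ a ∈ s, ∃ b ∈ s, ¬(G'.Adj a b ↔ G.Adj a b) := by
  contrapose! h
  ext a b
  exact h a a.2 b b.2

theorem Connected.exists_walk_length_lt_card [Fintype V] {G : SimpleGraph V}
    (hG : G.Connected) (u v : V) : ∃ p : G.Walk u v, p.length < Fintype.card V :=
  ⟨(hG u v).some.toPath, (hG u v).some.toPath.2.length_lt⟩

theorem Connected.exists_walk_length_lt_card_of_induce {G G' : SimpleGraph V} {s : Finset V}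
    (hle : G ≤ G') (hG : (G.induce (s : Set V)).Connected) {x y : V} (hx : x ∈ s) (hy : y ∈ s) :
    ∃ p : G'.Walk x y, p.length < s.card := by
  obtain ⟨p, hp⟩ := hG.exists_walk_length_lt_card ⟨x, hx⟩ ⟨y, hy⟩
  refine ⟨p.map ((Hom.ofLE hle).comp (Embedding.induce (s : Set V)).toHom),
    (Walk.length_map _ p).trans_lt ?_⟩
  simpa using hp

end SimpleGraph

open SimpleGraph in
theorem statement_10_general
    {V K : Type*} [Fintype V]
    (G A D G' : SimpleGraph V)
    (hG' : G' = (G \ D) ⊔ A)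
    (W : Set V)
    (hW : W = {x : V | ∃ u v : V, (A.Adj u v ∨ D.Adj u v) ∧
      ((∃ p : (G ⊔ A).Walk u x, p.length ≤ 3) ∨ (∃ p : (G ⊔ A).Walk v x, p.length ≤ 3))})
    (H : SimpleGraph K) (hH : H.Connected) :
    (Finset.univ.filter fun S : Finset V =>
        S.card = 4 ∧ Nonempty ((G'.induce (S : Set V)) ≃g H) ∧ G'.induce (S : Set V) ≠ G.induce (S : Set V)).card
    = (Finset.univ.filter fun S : Finset V =>
        S.card = 4 ∧ Nonempty ((G'.induce (S : Set V)) ≃g H) ∧ G'.induce (S : Set V) ≠ G.induce (S : Set V) ∧ (S : Set V) ⊆ W).card := by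
  subst hG' hW
  congr 1
  refine Finset.filter_congr fun S _ =>
    ⟨fun ⟨hcard, ⟨e⟩, hne⟩ => ⟨hcard, ⟨e⟩, hne, ?_⟩, fun ⟨hcard, he, hne, _⟩ => ⟨hcard, he, hne⟩⟩
  obtain ⟨a, ha, b, -, hab⟩ := exists_adj_ne_of_induce_ne hne
  intro x hx
  obtain ⟨p, hp⟩ := (e.connected_iff.mpr hH).exists_walk_length_lt_card_of_induce
    (sdiff_sup_le_sup G D A) ha hx
  exact ⟨a, b, adj_or_adj_of_sdiff_sup_adj_ne hab, Or.inl ⟨p, by omega⟩⟩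

theorem statement_10
    {V K : Type*} [Fintype V] [DecidableEq V] [Fintype K]
    (G A D G' : SimpleGraph V)
    (hdisj : ∀ u v : V, ¬ (G.Adj u v ∧ A.Adj u v))
    (hD : D ≤ G)
    (hG' : G' = (G \ D) ⊔ A)
    (W : Set V)
    (hW : W = {x : V | ∃ u v : V, (A.Adj u v ∨ D.Adj u v) ∧
      ((∃ p : (G ⊔ A).Walk u x, p.length ≤ 3) ∨ (∃ p : (G ⊔ A).Walk v x, p.length ≤ 3))})
    (H : SimpleGraph K) (hK : Fintype.card K = 4) (hH : H.Connected) :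
    (Finset.univ.filter fun S : Finset V =>
        S.card = 4 ∧ Nonempty ((G'.induce (S : Set V)) ≃g H) ∧ G'.induce (S : Set V) ≠ G.induce (S : Set V)).card
    = (Finset.univ.filter fun S : Finset V =>
        S.card = 4 ∧ Nonempty ((G'.induce (S : Set V)) ≃g H) ∧ G'.induce (S : Set V) ≠ G.induce (S : Set V) ∧ (S : Set V) ⊆ W).card :=
  statement_10_general G A D G' hG' W hW H hH
end

section
/- Let H be a connected simple graph on a 4-element vertex set. In the fully dynamic setting, the number of 4-subsets S of V such that G[S] is isomorphic to H and G[S] differs from G'[S] equals the number of such 4-subsets S that are moreover contained in W; that is, all induced copies of H in G destroyed by the fully dynamic batch are counted by counting within the local subgraph on W. -/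
open scoped Classical

theorem statement_11
    {V K : Type*} [Fintype V] [DecidableEq V] [Fintype K]
    (G A D G' : SimpleGraph V)
    (hdisj : ∀ u v : V, ¬ (G.Adj u v ∧ A.Adj u v))
    (hD : D ≤ G)
    (hG' : G' = (G \ D) ⊔ A)
    (W : Set V)
    (hW : W = {x : V | ∃ u v : V, (A.Adj u v ∨ D.Adj u v) ∧
      ((∃ p : (G ⊔ A).Walk u x, p.length ≤ 3) ∨ (∃ p : (G ⊔ A).Walk v x, p.length ≤ 3))})
    (H : SimpleGraph K) (hK : Fintype.card K = 4) (hH : H.Connected) :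
    (Finset.univ.filter fun S : Finset V =>
        S.card = 4 ∧ Nonempty ((G.induce (S : Set V)) ≃g H) ∧ G.induce (S : Set V) ≠ G'.induce (S : Set V)).card
    = (Finset.univ.filter fun S : Finset V =>
        S.card = 4 ∧ Nonempty ((G.induce (S : Set V)) ≃g H) ∧ G.induce (S : Set V) ≠ G'.induce (S : Set V) ∧ (S : Set V) ⊆ W).card := by
  congr 1
  apply Finset.filter_congr
  intro S _
  constructor
  · rintro ⟨h1, h2, h3⟩
    refine ⟨h1, h2, h3, ?_⟩
    -- find differing pair
    have hdiff : ∃ a b : (S : Set V), ¬ (G.Adj a b ↔ G'.Adj a b) := by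
      by_contra hc
      push_neg at hc
      apply h3
      ext a b
      simp only [SimpleGraph.comap_adj, Function.Embedding.coe_subtype]
      exact hc a b
    obtain ⟨a, b, hab⟩ := hdiff
    have hAD : A.Adj a b ∨ D.Adj a b := by
      subst hG'
      simp only [SimpleGraph.sup_adj, SimpleGraph.sdiff_adj] at hab
      by_cases hg : G.Adj a b
      · right
        by_contra hd
        exact hab ⟨fun _ => Or.inl ⟨hg, hd⟩, fun _ => hg⟩
      · left
        by_contra ha
        exact hab ⟨fun h => absurd h hg, fun h => absurd (h.resolve_right ha).1 hg⟩
    -- connectedness of induced graph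
    have hconn : (G.induce (S : Set V)).Connected := (h2.some.connected_iff).mpr hH
    intro x hx
    rw [hW]
    refine ⟨a, b, hAD, Or.inl ?_⟩
    have hreach : (G.induce (S : Set V)).Reachable a ⟨x, hx⟩ := hconn a ⟨x, hx⟩
    obtain ⟨p⟩ := hreach
    have hcard : Fintype.card (S : Set V) = 4 := by
      simpa using h1
    have hlen : p.toPath.1.length ≤ 3 := by
      have := p.toPath.2.length_lt (G := G.induce (S : Set V))
      omega
    let f : G.induce (S : Set V) →g (G ⊔ A) :=
      (SimpleGraph.Hom.ofLE le_sup_left).comp (SimpleGraph.Embedding.induce (S : Set V)).toHom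
    exact ⟨(p.toPath.1).map f, (SimpleGraph.Walk.length_map f (p.toPath.1)).le.trans hlen⟩
  · rintro ⟨h1, h2, h3, _⟩
    exact ⟨h1, h2, h3⟩
end

section
/- Let H be a connected simple graph on a 4-element vertex set, and consider the decremental setting in which a batch D of existing edges is deleted from G (the case A = ∅ of the fully dynamic update). Then the number of 4-subsets S of V with G'[S] isomorphic to H, plus the number of 4-subsets S contained in W with G[S] isomorphic to H, equals the number of 4-subsets S of V with G[S] isomorphic to H, plus the number of 4-subsets S contained in W with G'[S] isomorphic to H. -/
open scoped Classical

lemma no_D_edge {V K : Type*} [Fintype V] [DecidableEq V] [Fintype K]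
    (G D X : SimpleGraph V) (hX : X ≤ G)
    (W : Set V)
    (hW : W = {x : V | ∃ u v : V, D.Adj u v ∧
      ((∃ p : G.Walk u x, p.length ≤ 3) ∨ (∃ p : G.Walk v x, p.length ≤ 3))})
    (H : SimpleGraph K) (hK : Fintype.card K = 4) (hH : H.Connected)
    (S : Finset V) (hS : S.card = 4) (hSW : ¬ (S : Set V) ⊆ W)
    (hiso : Nonempty ((X.induce (S : Set V)) ≃g H)) :
    ∀ u v : V, u ∈ S → v ∈ S → ¬ D.Adj u v := by
  intro u v hu hv hDuv
  obtain ⟨x, hxS, hxW⟩ := Set.not_subset.mp hSW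
  obtain ⟨e⟩ := hiso
  have hconn : (X.induce (S : Set V)).Connected := e.connected_iff.mpr hH
  have hr := hconn ⟨u, hu⟩ ⟨x, hxS⟩
  obtain ⟨p⟩ := hr
  obtain ⟨q, hq⟩ := p.toPath
  have hcard : Fintype.card ((S : Set V) : Type _) = 4 := by
    simp [hS]
  have hlen : q.length < 4 := by
    have := hq.length_lt
    omega
  let w : G.Walk u x :=
    (q.map (SimpleGraph.Embedding.induce (S : Set V)).toHom).mapLe hX
  have hwlen : w.length ≤ 3 := by
    have : w.length = q.length := by
      exact (SimpleGraph.Walk.length_mapLe hX _).trans (SimpleGraph.Walk.length_map _ _)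
    omega
  exact hxW (hW ▸ ⟨u, v, hDuv, Or.inl ⟨w, hwlen⟩⟩)

theorem statement_12
    {V K : Type*} [Fintype V] [DecidableEq V] [Fintype K]
    (G D G' : SimpleGraph V)
    (hD : D ≤ G)
    (hG' : G' = G \ D)
    (W : Set V)
    (hW : W = {x : V | ∃ u v : V, D.Adj u v ∧
      ((∃ p : G.Walk u x, p.length ≤ 3) ∨ (∃ p : G.Walk v x, p.length ≤ 3))})
    (H : SimpleGraph K) (hK : Fintype.card K = 4) (hH : H.Connected) :
    (Finset.univ.filter fun S : Finset V =>
        S.card = 4 ∧ Nonempty ((G'.induce (S : Set V)) ≃g H)).card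
      + (Finset.univ.filter fun S : Finset V =>
        S.card = 4 ∧ (S : Set V) ⊆ W ∧ Nonempty ((G.induce (S : Set V)) ≃g H)).card
    = (Finset.univ.filter fun S : Finset V =>
        S.card = 4 ∧ Nonempty ((G.induce (S : Set V)) ≃g H)).card
      + (Finset.univ.filter fun S : Finset V =>
        S.card = 4 ∧ (S : Set V) ⊆ W ∧ Nonempty ((G'.induce (S : Set V)) ≃g H)).card := by
  have hG'le : G' ≤ G := by rw [hG']; exact sdiff_le
  have key : ∀ S : Finset V, S.card = 4 → ¬ (S : Set V) ⊆ W →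
      (Nonempty ((G'.induce (S : Set V)) ≃g H) ↔ Nonempty ((G.induce (S : Set V)) ≃g H)) := by
    intro S hS hSW
    have hEq : ∀ (X : SimpleGraph V), X ≤ G →
        Nonempty ((X.induce (S : Set V)) ≃g H) →
        G.induce (S : Set V) = G'.induce (S : Set V) := by
      intro X hX hiso
      have hnd := no_D_edge G D X hX W hW H hK hH S hS hSW hiso
      ext ⟨a, ha⟩ ⟨b, hb⟩
      simp only [SimpleGraph.comap_adj, Function.Embedding.coe_subtype, hG',
        SimpleGraph.sdiff_adj]
      have := hnd a b ha hb
      tauto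
    constructor
    · intro h
      exact (hEq G' hG'le h ▸ h)
    · intro h
      exact ((hEq G le_rfl h).symm ▸ h)
  have hsplit : ∀ (X : SimpleGraph V),
      (Finset.univ.filter fun S : Finset V =>
          S.card = 4 ∧ Nonempty ((X.induce (S : Set V)) ≃g H)).card
    = (Finset.univ.filter fun S : Finset V =>
          S.card = 4 ∧ (S : Set V) ⊆ W ∧ Nonempty ((X.induce (S : Set V)) ≃g H)).card
    + (Finset.univ.filter fun S : Finset V =>
          (S.card = 4 ∧ ¬ (S : Set V) ⊆ W) ∧ Nonempty ((X.induce (S : Set V)) ≃g H)).card := by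
    intro X
    rw [← Finset.card_filter_add_card_filter_not
      (s := Finset.univ.filter fun S : Finset V =>
        S.card = 4 ∧ Nonempty ((X.induce (S : Set V)) ≃g H))
      (p := fun S : Finset V => (S : Set V) ⊆ W)]
    congr 1 <;> rw [Finset.filter_filter] <;>
      exact congrArg Finset.card (Finset.filter_congr (fun S _ => by tauto))
  have hNeq :
      (Finset.univ.filter fun S : Finset V =>
          (S.card = 4 ∧ ¬ (S : Set V) ⊆ W) ∧ Nonempty ((G'.induce (S : Set V)) ≃g H))
    = (Finset.univ.filter fun S : Finset V =>
          (S.card = 4 ∧ ¬ (S : Set V) ⊆ W) ∧ Nonempty ((G.induce (S : Set V)) ≃g H)) :=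
    Finset.filter_congr fun S _ =>
      and_congr_right fun hc => key S hc.1 hc.2
  rw [hsplit G', hsplit G, hNeq]
  omega
end
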